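/- arXiv:2604.06601 — 4 statements merged into one kernel-verified Lean document; each statement's English description precedes it below -/
import Mathlib

section
/- Let L be a finite-dimensional complex vector space and S a graded linear subspace of Sym(L^*), where Sym(L) acts on Sym(L^*) by directional derivatives (v acts as D_v). Define S^⊥ = {f ∈ Sym(L) : (f ⊙ g)(0) = 0 for all g ∈ S}. Then S^⊥ is a homogeneous ideal of Sym(L) if and only if S is closed under translation, i.e., for every f(x) ∈ S and v ∈ L the polynomial f(x+v) lies in S. -/
open MvPolynomial

/-- The constant term of `f ⊙ g`, where `f ∈ Sym L = ℂ[e₁,...,e_r]` acts on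
`g ∈ Sym L^* = ℂ[x₁,...,x_r]` by directional derivatives (`eᵢ ↦ ∂/∂xᵢ`):
`(f ⊙ g)(0) = ∑_m m! ⬝ coeff m f ⬝ coeff m g`. -/
noncomputable def apolar {r : ℕ} (f g : MvPolynomial (Fin r) ℂ) : ℂ :=
  ∑ m ∈ f.support, f.coeff m * g.coeff m * (m.prod fun _ k => (Nat.factorial k : ℂ))

/-!
Write `S^⊥` for the orthogonal of `S` under the apolar pairing. Multiplication by `X i` is
adjoint to `∂/∂xᵢ`, so `S^⊥` is closed under multiplication by the variables exactly when `S`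
is closed under partial derivatives; the converse direction needs `S^⊥⊥ = S`, which holds for
graded `S` because the pairing is perfect on each (finite-dimensional) homogeneous piece.
Homogeneous projections are self-adjoint, so `S^⊥` is automatically homogeneous.

It remains to see that a subspace is closed under translation iff it is closed under partial
derivatives. With `t` a new variable, the coefficients of `f(x + t v)` are `D_vᵏ f / k!`;
these lie in `S` if `S` is closed under derivatives, and conversely a functional vanishing on a
translation-invariant `S` kills `f(x + t v)` for every `t`, hence its linear coefficient `D_v f`.
-/

namespace MvPolynomial

variable {σ K : Type*} [Field K]

theorem mul_mem_of_forall_X_mul_mem {R : Type*} [CommSemiring R]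
    {N : Submodule R (MvPolynomial σ R)} (hN : ∀ i, ∀ f ∈ N, X i * f ∈ N)
    (c : MvPolynomial σ R) {f : MvPolynomial σ R} (hf : f ∈ N) : c * f ∈ N := by
  induction c using MvPolynomial.induction_on generalizing f with
  | C a => rw [← smul_eq_C_mul]; exact N.smul_mem a hf
  | add p q hp hq => rw [add_mul]; exact N.add_mem (hp hf) (hq hf)
  | mul_X p i hp => rw [mul_comm p, mul_assoc]; exact hN i _ (hp hf)

instance [Finite σ] (n : ℕ) : FiniteDimensional K (homogeneousSubmodule σ K n) :=
  Submodule.finiteDimensional_of_le (S₂ := restrictTotalDegree σ K n) fun _ hp =>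
    (mem_restrictTotalDegree _ _ _).mpr (IsHomogeneous.totalDegree_le hp)

/-- `translateLine v f` is the polynomial `t ↦ f(x + t v)` in an extra variable `t`. -/
noncomputable def translateLine (v : σ → K) :
    MvPolynomial σ K →ₐ[K] Polynomial (MvPolynomial σ K) :=
  aeval fun i => Polynomial.C (X i) + Polynomial.C (C (v i)) * Polynomial.X

lemma eval_C_translateLine (v : σ → K) (t : K) (f : MvPolynomial σ K) :
    (translateLine v f).eval (C t) = aeval (fun i => X i + C (t * v i)) f := by
  induction f using MvPolynomial.induction_on with
  | C a => simp [translateLine, Polynomial.algebraMap_apply, algebraMap_eq]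
  | add p q hp hq => simp [hp, hq]
  | mul_X p i hp =>
    rw [map_mul, map_mul, Polynomial.eval_mul, hp, aeval_X]
    congr 1
    simp [translateLine, C_mul]
    ring

lemma coeff_zero_translateLine (v : σ → K) (f : MvPolynomial σ K) :
    (translateLine v f).coeff 0 = f := by
  induction f using MvPolynomial.induction_on with
  | C a => simp [translateLine, Polynomial.algebraMap_apply, algebraMap_eq]
  | add p q hp hq => simp [hp, hq]
  | mul_X p i hp => simp [translateLine, hp, Polynomial.mul_coeff_zero] at hp ⊢

variable [Fintype σ]

noncomputable def dirDeriv (v : σ → K) : Derivation K (MvPolynomial σ K) (MvPolynomial σ K) :=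
  ∑ i, v i • pderiv i

lemma dirDeriv_apply (v : σ → K) (f : MvPolynomial σ K) :
    dirDeriv v f = ∑ i, v i • pderiv i f := by
  rw [dirDeriv, ← Derivation.coeFnAddMonoidHom_apply, map_sum, Finset.sum_apply]
  rfl

lemma dirDeriv_X (v : σ → K) (i : σ) : dirDeriv v (X i) = C (v i) := by
  classical
  simp [dirDeriv_apply, pderiv_X, Pi.single_apply, smul_eq_C_mul]

lemma dirDeriv_single [DecidableEq σ] (i : σ) : dirDeriv (Pi.single i 1) = pderiv (R := K) i := by
  ext f
  simp [dirDeriv_apply, Pi.single_apply]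

lemma derivative_translateLine (v : σ → K) (f : MvPolynomial σ K) :
    Polynomial.derivative (translateLine v f) = translateLine v (dirDeriv v f) := by
  induction f using MvPolynomial.induction_on with
  | C a => simp [translateLine, Polynomial.algebraMap_apply, algebraMap_eq]
  | add p q hp hq => simp [hp, hq]
  | mul_X p i hp =>
    rw [map_mul, Polynomial.derivative_mul, hp, Derivation.leibniz, dirDeriv_X]
    simp [translateLine, Polynomial.algebraMap_apply, algebraMap_eq]
    ring

lemma coeff_one_translateLine (v : σ → K) (f : MvPolynomial σ K) :
    (translateLine v f).coeff 1 = dirDeriv v f := by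
  simpa [Polynomial.coeff_derivative, coeff_zero_translateLine] using
    congr_arg (Polynomial.coeff · 0) (derivative_translateLine v f)

lemma coeff_succ_translateLine [CharZero K] (v : σ → K) (f : MvPolynomial σ K) (k : ℕ) :
    (translateLine v f).coeff (k + 1) =
      ((k : K) + 1)⁻¹ • (translateLine v (dirDeriv v f)).coeff k := by
  have hk : ((k : K) + 1) ≠ 0 := by exact_mod_cast k.succ_ne_zero
  rw [← derivative_translateLine, Polynomial.coeff_derivative, eq_inv_smul_iff₀ hk, smul_eq_C_mul]
  simp [mul_comm]

lemma coeff_translateLine_mem [CharZero K] {S : Submodule K (MvPolynomial σ K)} {v : σ → K}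
    (hS : ∀ g ∈ S, dirDeriv v g ∈ S) {f : MvPolynomial σ K} (hf : f ∈ S) (k : ℕ) :
    (translateLine v f).coeff k ∈ S := by
  induction k generalizing f with
  | zero => rwa [coeff_zero_translateLine]
  | succ k ih => rw [coeff_succ_translateLine]; exact S.smul_mem _ (ih (hS f hf))

theorem aeval_translate_mem_of_dirDeriv_mem [CharZero K] {S : Submodule K (MvPolynomial σ K)}
    {v : σ → K} (hS : ∀ g ∈ S, dirDeriv v g ∈ S) {f : MvPolynomial σ K} (hf : f ∈ S) :
    aeval (fun i => X i + C (v i)) f ∈ S := by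
  have h := eval_C_translateLine v 1 f
  simp only [one_mul] at h
  rw [← h, Polynomial.eval_eq_sum_range]
  exact S.sum_mem fun k _ => by simpa using coeff_translateLine_mem hS hf k

theorem dirDeriv_mem_of_aeval_translate_mem [Infinite K] {S : Submodule K (MvPolynomial σ K)}
    (hS : ∀ f ∈ S, ∀ v : σ → K, aeval (fun i => X i + C (v i)) f ∈ S) (v : σ → K)
    {g : MvPolynomial σ K} (hg : g ∈ S) : dirDeriv v g ∈ S := by
  by_contra hDg
  obtain ⟨ℓ, hℓ, hℓS⟩ := S.exists_dual_map_eq_bot_of_notMem hDg inferInstance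
  rw [← LinearMap.le_ker_iff_map] at hℓS
  set p := translateLine v g
  let Q : Polynomial K :=
    ∑ k ∈ Finset.range (p.natDegree + 2), Polynomial.C (ℓ (p.coeff k)) * Polynomial.X ^ k
  have hQ : Q = 0 := Polynomial.funext fun t => by
    have h := eval_C_translateLine v t g
    rw [Polynomial.eval_eq_sum_range' (by omega : p.natDegree < p.natDegree + 2)] at h
    have h0 := congr_arg ℓ h
    rw [hℓS (hS g hg _), map_sum] at h0
    simp only [Q, Polynomial.eval_finsetSum, Polynomial.eval_mul, Polynomial.eval_C,
      Polynomial.eval_pow, Polynomial.eval_X, Polynomial.eval_zero]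
    rw [← h0]
    refine Finset.sum_congr rfl fun k _ => ?_
    rw [← C_pow, mul_comm _ (C _), ← smul_eq_C_mul, map_smul, smul_eq_mul, mul_comm]
  have h1 := congr_arg (Polynomial.coeff · 1) hQ
  simp [Q, p, coeff_one_translateLine] at h1
  exact hℓ h1

theorem forall_aeval_translate_mem_iff_forall_pderiv_mem [CharZero K]
    {S : Submodule K (MvPolynomial σ K)} :
    (∀ f ∈ S, ∀ v : σ → K, aeval (fun i => X i + C (v i)) f ∈ S) ↔
      ∀ i, ∀ g ∈ S, pderiv i g ∈ S := by
  classical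
  constructor
  · intro hS i g hg
    rw [← dirDeriv_single]
    exact dirDeriv_mem_of_aeval_translate_mem hS _ hg
  · intro hS f hf v
    refine aeval_translate_mem_of_dirDeriv_mem (fun g hg => ?_) hf
    rw [dirDeriv_apply]
    exact S.sum_mem fun i _ => S.smul_mem _ (hS i g hg)

end MvPolynomial

open scoped Nat

variable {r : ℕ}

lemma apolar_eq_sum_of_support_subset {f g : MvPolynomial (Fin r) ℂ} {s : Finset (Fin r →₀ ℕ)}
    (h : f.support ⊆ s) :
    apolar f g = ∑ m ∈ s, f.coeff m * g.coeff m * (m.prod fun _ k => (k ! : ℂ)) :=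
  Finset.sum_subset h fun m _ hm => by simp [notMem_support_iff.mp hm]

lemma apolar_comm (f g : MvPolynomial (Fin r) ℂ) : apolar f g = apolar g f := by
  rw [apolar_eq_sum_of_support_subset Finset.subset_union_left,
    apolar_eq_sum_of_support_subset (f := g) Finset.subset_union_right]
  exact Finset.sum_congr rfl fun m _ => by ring

lemma apolar_add_left (f f' g : MvPolynomial (Fin r) ℂ) :
    apolar (f + f') g = apolar f g + apolar f' g := by
  rw [apolar_eq_sum_of_support_subset support_add,
    apolar_eq_sum_of_support_subset (f := f) Finset.subset_union_left,
    apolar_eq_sum_of_support_subset (f := f') Finset.subset_union_right, ← Finset.sum_add_distrib]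
  exact Finset.sum_congr rfl fun m _ => by rw [coeff_add]; ring

lemma apolar_smul_left (a : ℂ) (f g : MvPolynomial (Fin r) ℂ) :
    apolar (a • f) g = a * apolar f g := by
  rw [apolar_eq_sum_of_support_subset support_smul, apolar, Finset.mul_sum]
  exact Finset.sum_congr rfl fun m _ => by rw [coeff_smul, smul_eq_mul]; ring

noncomputable def apolarForm : LinearMap.BilinForm ℂ (MvPolynomial (Fin r) ℂ) :=
  LinearMap.mk₂ ℂ apolar apolar_add_left apolar_smul_left
    (fun f g g' => by rw [apolar_comm, apolar_add_left, apolar_comm g, apolar_comm g'])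
    (fun a f g => by rw [apolar_comm, apolar_smul_left, apolar_comm g, smul_eq_mul])

lemma apolarForm_apply (f g : MvPolynomial (Fin r) ℂ) : apolarForm f g = apolar f g := rfl

lemma apolarForm_isSymm : (apolarForm (r := r)).IsSymm := ⟨apolar_comm⟩

lemma mem_apolarForm_orthogonal {S : Submodule ℂ (MvPolynomial (Fin r) ℂ)}
    {f : MvPolynomial (Fin r) ℂ} : f ∈ apolarForm.orthogonal S ↔ ∀ g ∈ S, apolar f g = 0 := by
  simp only [LinearMap.BilinForm.mem_orthogonal_iff, apolarForm_apply, apolar_comm _ f]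

lemma prod_factorial_single_add (i : Fin r) (m : Fin r →₀ ℕ) :
    ((Finsupp.single i 1 + m).prod fun _ k => (k ! : ℂ)) =
      (m i + 1) * m.prod fun _ k => (k ! : ℂ) := by
  classical
  rw [Finsupp.prod_fintype _ _ (by simp), Finsupp.prod_fintype _ _ (by simp),
    Fintype.prod_eq_mul_prod_compl i, Fintype.prod_eq_mul_prod_compl i, ← mul_assoc]
  congr 1
  · simp [add_comm 1, Nat.factorial_succ]
  · refine Finset.prod_congr rfl fun j hj => ?_
    rw [Finset.mem_compl, Finset.mem_singleton] at hj
    simp [Ne.symm hj]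

lemma apolar_X_mul (i : Fin r) (f g : MvPolynomial (Fin r) ℂ) :
    apolar (X i * f) g = apolar f (pderiv i g) := by
  rw [apolar, support_X_mul, Finset.sum_map, apolar]
  refine Finset.sum_congr rfl fun m _ => ?_
  simp only [addLeftEmbedding_apply, coeff_X_mul, coeff_pderiv, prod_factorial_single_add,
    add_comm m]
  ring

lemma apolar_homogeneousComponent (n : ℕ) (f g : MvPolynomial (Fin r) ℂ) :
    apolar (homogeneousComponent n f) g = apolar f (homogeneousComponent n g) := by
  rw [apolar_eq_sum_of_support_subset (s := f.support)
    (by simp [support_homogeneousComponent, Finset.filter_subset]), apolar]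
  refine Finset.sum_congr rfl fun m _ => ?_
  simp only [coeff_homogeneousComponent]
  split_ifs <;> simp

lemma apolar_monomial (f : MvPolynomial (Fin r) ℂ) (m : Fin r →₀ ℕ) (c : ℂ) :
    apolar f (monomial m c) = f.coeff m * c * m.prod fun _ k => (k ! : ℂ) := by
  classical
  rw [apolar_eq_sum_of_support_subset (Finset.subset_insert m _), Finset.sum_eq_single m]
  · simp
  · intro m' _ hm'
    simp [coeff_monomial, Ne.symm hm']
  · simp

lemma nondegenerate_apolarForm_restrict (n : ℕ) :
    (apolarForm.restrict (homogeneousSubmodule (Fin r) ℂ n)).Nondegenerate := by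
  refine (LinearMap.IsRefl.nondegenerate_iff_separatingLeft
    (apolarForm_isSymm.restrict _).isRefl).mpr ?_
  rintro ⟨x, hx⟩ hx0
  ext m
  by_contra hm
  have hmono : monomial m (1 : ℂ) ∈ homogeneousSubmodule (Fin r) ℂ n :=
    isHomogeneous_monomial 1 (by rw [Finsupp.degree_eq_weight_one]; exact hx hm)
  have h := hx0 ⟨_, hmono⟩
  simp [apolarForm_apply, apolar_monomial, Nat.factorial_ne_zero] at h
  exact hm (by simpa using h)

lemma apolar_homogeneousComponent_right_of_mem {n : ℕ} {x : MvPolynomial (Fin r) ℂ}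
    (hx : x ∈ homogeneousSubmodule (Fin r) ℂ n) (g : MvPolynomial (Fin r) ℂ) :
    apolar x (homogeneousComponent n g) = apolar x g := by
  rw [← apolar_homogeneousComponent, homogeneousComponent_eq_self hx]

theorem apolarForm_orthogonal_orthogonal {S : Submodule ℂ (MvPolynomial (Fin r) ℂ)}
    (hS : ∀ f ∈ S, ∀ n, homogeneousComponent n f ∈ S) :
    apolarForm.orthogonal (apolarForm.orthogonal S) = S := by
  refine le_antisymm (fun g hg => ?_)
    (LinearMap.BilinForm.le_orthogonal_orthogonal apolarForm_isSymm.isRefl)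
  rw [← sum_homogeneousComponent g]
  refine S.sum_mem fun n _ => ?_
  set V := homogeneousSubmodule (Fin r) ℂ n
  set B := apolarForm.restrict V
  suffices h : (⟨_, homogeneousComponent_mem n g⟩ : V) ∈
      B.orthogonal (B.orthogonal (S.comap V.subtype)) by
    rwa [LinearMap.BilinForm.orthogonal_orthogonal (nondegenerate_apolarForm_restrict n)
      (apolarForm_isSymm.restrict V).isRefl] at h
  rw [LinearMap.BilinForm.mem_orthogonal_iff]
  rintro ⟨x, hxV⟩ hx
  rw [LinearMap.BilinForm.mem_orthogonal_iff] at hx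
  have hxS : x ∈ apolarForm.orthogonal S := mem_apolarForm_orthogonal.mpr fun s hs => by
    rw [← apolar_homogeneousComponent_right_of_mem hxV, apolar_comm]
    exact hx ⟨_, homogeneousComponent_mem n s⟩ (hS s hs n)
  change apolar x (homogeneousComponent n g) = 0
  rw [apolar_homogeneousComponent_right_of_mem hxV, apolar_comm]
  exact mem_apolarForm_orthogonal.mp hg x hxS

theorem forall_pderiv_mem_iff_X_mul_mem_orthogonal {S : Submodule ℂ (MvPolynomial (Fin r) ℂ)}
    (hS : ∀ f ∈ S, ∀ n, homogeneousComponent n f ∈ S) :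
    (∀ i, ∀ g ∈ S, pderiv i g ∈ S) ↔
      ∀ i, ∀ h ∈ apolarForm.orthogonal S, X i * h ∈ apolarForm.orthogonal S := by
  constructor
  · intro hder i h hh
    rw [mem_apolarForm_orthogonal] at hh ⊢
    intro g hg
    rw [apolar_X_mul]
    exact hh _ (hder i g hg)
  · intro hmul i g hg
    rw [← apolarForm_orthogonal_orthogonal hS, LinearMap.BilinForm.mem_orthogonal_iff]
    intro h hh
    rw [apolarForm_apply, ← apolar_X_mul]
    exact mem_apolarForm_orthogonal.mp (hmul i h hh) g hg

lemma homogeneousComponent_mem_apolarForm_orthogonal {S : Submodule ℂ (MvPolynomial (Fin r) ℂ)}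
    (hS : ∀ f ∈ S, ∀ n, homogeneousComponent n f ∈ S) {f : MvPolynomial (Fin r) ℂ}
    (hf : f ∈ apolarForm.orthogonal S) (n : ℕ) :
    homogeneousComponent n f ∈ apolarForm.orthogonal S := by
  rw [mem_apolarForm_orthogonal] at hf ⊢
  intro g hg
  rw [apolar_homogeneousComponent]
  exact hf _ (hS g hg n)

/-- For a graded subspace `S ⊆ Sym L^*`, the space
`S^⊥ = {f ∈ Sym L : (f ⊙ g)(0) = 0 for all g ∈ S}` is a homogeneous ideal
if and only if `S` is closed under translation. -/
theorem stmt0 (r : ℕ) (S : Submodule ℂ (MvPolynomial (Fin r) ℂ))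
    (hgraded : ∀ f ∈ S, ∀ n : ℕ, homogeneousComponent n f ∈ S) :
    (∃ I : Ideal (MvPolynomial (Fin r) ℂ),
        (∀ f, f ∈ I ↔ ∀ g ∈ S, apolar f g = 0) ∧
        (∀ f ∈ I, ∀ n : ℕ, homogeneousComponent n f ∈ I)) ↔
    (∀ f ∈ S, ∀ v : Fin r → ℂ,
        (aeval (fun i => X i + C (v i)) f : MvPolynomial (Fin r) ℂ) ∈ S) := by
  rw [forall_aeval_translate_mem_iff_forall_pderiv_mem,
    forall_pderiv_mem_iff_X_mul_mem_orthogonal hgraded]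
  constructor
  · rintro ⟨I, hI, -⟩ i h hh
    simp only [mem_apolarForm_orthogonal, ← hI] at hh ⊢
    exact I.mul_mem_left _ hh
  · intro hmul
    refine ⟨{ (apolarForm.orthogonal S).toAddSubmonoid with
        smul_mem' := fun c f hf => mul_mem_of_forall_X_mul_mem hmul c hf },
      fun f => mem_apolarForm_orthogonal,
      fun f hf n => homogeneousComponent_mem_apolarForm_orthogonal hgraded hf n⟩
end

section
/- For a bihomogeneous element f ∈ Ψ_L of bidegree (a,b), the adjoint of left multiplication by f on Ψ_L, with respect to the constant-term pairing between Ψ_L and Ψ_{L^*}, is given on the bigraded component Ψ_{L^*}^{c,d} by (−1)^{b(d−b)} f ⊙ − : Ψ_{L^*}^{c,d} → Ψ_{L^*}^{c−a,d−b}. -/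
/-
Both sides expand into sums, over pairs of disjoint sets `T, U`, of the constant term of
`h_U(∂) f_T(∂) g_{T ∪ U}`: on the left because `f_T h_U` is the coefficient that `f h` contributes
to `dx_{T ∪ U}`, on the right because contracting `g` along `dx_T` leaves a multiple of
`g_{T ∪ U}` in degree `U`. The scalar parts agree since constant-coefficient differential
operators compose multiplicatively, `(p q)(∂) = p(∂) ∘ q(∂)`. The Koszul signs differ by the
inversions between `T` and `U` counted in both directions, i.e. by `|T| |U| = b (d - b)` on every
term where `f_T` and `g_{T ∪ U}` can be nonzero.
-/

open MvPolynomial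

/-- Model of the superspace ring `Ψ = ℂ[x₁,…,x_r] ⊗ Λ(dx₁,…,dx_r)`: an element is the
family of its coefficients, `ω S` being the polynomial coefficient of `dx_S`
(`dx_S = dx_{i₁} ∧ ⋯ ∧ dx_{i_b}` with `i₁ < ⋯ < i_b` the elements of `S`). -/
abbrev SupSp (r : ℕ) : Type := Finset (Fin r) → MvPolynomial (Fin r) ℂ

/-- Contraction `ι_{e_i}` against the `i`-th coordinate vector. -/
noncomputable def contrOne {r : ℕ} (i : Fin r) (ω : SupSp r) : SupSp r :=
  fun S => if i ∈ S then 0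
    else ((-1 : ℂ) ^ (S.filter (fun t => t < i)).card) • ω (insert i S)

/-- The composite contraction `ι_{e_{i₁}} ∘ ⋯ ∘ ι_{e_{i_b}}` for `S = {i₁ < ⋯ < i_b}`. -/
noncomputable def iotaSet {r : ℕ} (S : Finset (Fin r)) (ω : SupSp r) : SupSp r :=
  (S.sort (· ≤ ·)).foldr (fun i acc => contrOne i acc) ω

/-- The constant-coefficient differential operator `∂^m` applied to a polynomial. -/
noncomputable def derivMon {r : ℕ} (m : Fin r →₀ ℕ) (p : MvPolynomial (Fin r) ℂ) :
    MvPolynomial (Fin r) ℂ :=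
  ∑ m' ∈ p.support,
    (p.coeff m' * ∏ i ∈ m.support, ((m' i).descFactorial (m i) : ℂ)) •
      monomial (m' - m) (1 : ℂ)

/-- The action `⊙` of `Ψ_L` on `Ψ_{L^*}`: the basis element `e^m de_S` acts as
`∂^m ∘ ι_{e_{i₁}} ∘ ⋯ ∘ ι_{e_{i_b}}`. -/
noncomputable def odot {r : ℕ} (f g : SupSp r) : SupSp r :=
  ∑ S : Finset (Fin r), ∑ m ∈ (f S).support,
    ((f S).coeff m) • ((fun T => derivMon m (iotaSet S g T)) : SupSp r)

/-- The pairing `Ψ_L × Ψ_{L^*} → ℂ`, `(f,g) ↦` constant term of `f ⊙ g`. -/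
noncomputable def spair {r : ℕ} (f g : SupSp r) : ℂ :=
  coeff 0 (odot f g (∅ : Finset (Fin r)))

/-- Supercommutative multiplication on the superspace ring. -/
noncomputable def smul' {r : ℕ} (f g : SupSp r) : SupSp r :=
  fun S => ∑ T ∈ S.powerset,
    ((-1 : ℂ) ^ (∑ i ∈ T, ((S \ T).filter (fun j => j < i)).card)) • (f T * g (S \ T))

/-- Bihomogeneity of bidegree `(a,b)` (commutative degree `a`, anticommutative degree `b`). -/
def BiHom {r : ℕ} (a b : ℕ) (ω : SupSp r) : Prop :=
  ∀ S : Finset (Fin r), (S.card = b → (ω S).IsHomogeneous a) ∧ (S.card ≠ b → ω S = 0)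

/-- The exterior derivative `d`. -/
noncomputable def extd {r : ℕ} (ω : SupSp r) : SupSp r :=
  fun S => ∑ j ∈ S,
    ((-1 : ℂ) ^ (S.filter (fun t => t < j)).card) • (pderiv j (ω (S.erase j)) : MvPolynomial (Fin r) ℂ)

/-- Contraction `ι_𝓔` with the Euler vector field `𝓔 = ∑ xᵢ eᵢ`. -/
noncomputable def iotaE {r : ℕ} (ω : SupSp r) : SupSp r :=
  fun S => ∑ i ∈ Sᶜ,
    ((-1 : ℂ) ^ (S.filter (fun t => t < i)).card) • (X i * ω (insert i S))

namespace MvPolynomial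

variable {r : ℕ}

theorem coeff_derivMon (m : Fin r →₀ ℕ) (p : MvPolynomial (Fin r) ℂ) (μ : Fin r →₀ ℕ) :
    coeff μ (derivMon m p) =
      coeff (μ + m) p * ∏ i, (((μ + m) i).descFactorial (m i) : ℂ) := by
  have hsupp : ∏ i ∈ m.support, (((μ + m) i).descFactorial (m i) : ℂ) =
      ∏ i, (((μ + m) i).descFactorial (m i) : ℂ) :=
    Finset.prod_subset (Finset.subset_univ _) fun i _ hi => by
      simp [Finsupp.notMem_support_iff.mp hi]
  rw [← hsupp, derivMon, coeff_sum]
  simp only [coeff_smul, coeff_monomial, smul_eq_mul, mul_ite, mul_one, mul_zero]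
  rw [Finset.sum_eq_single (μ + m)]
  · simp
  · intro ν _ hν
    split_ifs with hνμ
    · -- `ν - m = μ` with `ν ≠ μ + m` forces `ν i < m i` for some `i`, killing the product
      obtain ⟨i, hi⟩ : ∃ i, ν i < m i := by
        by_contra! hle
        exact hν (by rw [← hνμ, tsub_add_cancel_of_le (Finsupp.le_def.mpr hle)])
      have hzero : (ν i).descFactorial (m i) = 0 := Nat.descFactorial_eq_zero_iff_lt.mpr hi
      rw [Finset.prod_eq_zero (i := i) (Finsupp.mem_support_iff.mpr (by omega)) (by simp [hzero]),
        mul_zero]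
    · rfl
  · intro h
    simp [notMem_support_iff.mp h]

theorem derivMon_add (m : Fin r →₀ ℕ) (p q : MvPolynomial (Fin r) ℂ) :
    derivMon m (p + q) = derivMon m p + derivMon m q := by
  ext μ
  simp only [coeff_derivMon, coeff_add, add_mul]

theorem derivMon_smul (m : Fin r →₀ ℕ) (c : ℂ) (p : MvPolynomial (Fin r) ℂ) :
    derivMon m (c • p) = c • derivMon m p := by
  ext μ
  simp only [coeff_derivMon, coeff_smul, smul_eq_mul, mul_assoc]

theorem derivMon_derivMon (m n : Fin r →₀ ℕ) (p : MvPolynomial (Fin r) ℂ) :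
    derivMon m (derivMon n p) = derivMon (m + n) p := by
  ext μ
  have hdesc (i : Fin r) : ((μ + m + n) i).descFactorial (n i) * ((μ + m) i).descFactorial (m i)
      = ((μ + m + n) i).descFactorial ((m + n) i) := by
    have := Nat.descFactorial_mul_descFactorial (n := μ i + m i + n i) (Nat.le_add_left (n i) (m i))
    simpa only [Nat.add_sub_cancel, Finsupp.add_apply, mul_comm] using this
  rw [coeff_derivMon, coeff_derivMon, coeff_derivMon, ← add_assoc, mul_assoc,
    ← Finset.prod_mul_distrib]
  simp only [← hdesc, Nat.cast_mul]

noncomputable def derivMonₗ (m : Fin r →₀ ℕ) :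
    MvPolynomial (Fin r) ℂ →ₗ[ℂ] MvPolynomial (Fin r) ℂ where
  toFun := derivMon m
  map_add' := derivMon_add m
  map_smul' := derivMon_smul m

/-- `diffOp p` is the constant-coefficient differential operator `p(∂)`: `x^m` acts as `∂^m`. -/
noncomputable def diffOp :
    MvPolynomial (Fin r) ℂ →ₗ[ℂ] Module.End ℂ (MvPolynomial (Fin r) ℂ) :=
  (basisMonomials (Fin r) ℂ).constr ℂ derivMonₗ

theorem diffOp_apply (p : MvPolynomial (Fin r) ℂ) :
    diffOp p = ∑ m ∈ p.support, coeff m p • derivMonₗ m :=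
  Module.Basis.constr_apply _ _ _ _

theorem diffOp_monomial (m : Fin r →₀ ℕ) (c : ℂ) :
    diffOp (monomial m c) = c • derivMonₗ m := by
  rw [← mul_one c, ← smul_eq_mul, ← smul_monomial, map_smul, smul_eq_mul, mul_one]
  exact congrArg (c • ·) ((basisMonomials (Fin r) ℂ).constr_basis ℂ derivMonₗ m)

theorem diffOp_mul (p q : MvPolynomial (Fin r) ℂ) : diffOp (p * q) = diffOp p * diffOp q := by
  induction p using MvPolynomial.induction_on' with
  | add p₁ p₂ ih₁ ih₂ => rw [add_mul, map_add, map_add, ih₁, ih₂, add_mul]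
  | monomial m a =>
    induction q using MvPolynomial.induction_on' with
    | add q₁ q₂ ih₁ ih₂ => rw [mul_add, map_add, map_add, ih₁, ih₂, mul_add]
    | monomial n b =>
      refine LinearMap.ext fun w => ?_
      simp [monomial_mul, diffOp_monomial, derivMonₗ, derivMon_derivMon, mul_smul,
        smul_comm a b]

end MvPolynomial

namespace Finset

variable {α M : Type*}

theorem sum_powerset_eq_sum_disjoint [Fintype α] [DecidableEq α] [AddCommMonoid M]
    (φ : Finset α → Finset α → M) :
    ∑ S, ∑ T ∈ S.powerset, φ S T = ∑ T, ∑ U, if Disjoint T U then φ (T ∪ U) T else 0 := by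
  rw [sum_comm' (t' := univ) (s' := fun T => univ.filter (T ⊆ ·)) (by simp)]
  refine sum_congr rfl fun T _ => ?_
  rw [← sum_filter]
  refine sum_nbij' (· \ T) (T ∪ ·) ?_ ?_ ?_ ?_ ?_
  · simp [disjoint_sdiff]
  · simp
  · intro S hS
    exact union_sdiff_of_subset (mem_filter.mp hS).2
  · intro U hU
    exact union_sdiff_cancel_left (mem_filter.mp hU).2
  · intro S hS
    rw [union_sdiff_of_subset (mem_filter.mp hS).2]

variable [LinearOrder α]

/-- For disjoint `A`, `B`, `(-1) ^ invCount A B` is the sign that sorts `dx_A ∧ dx_B` into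
`dx_{A ∪ B}`. -/
def invCount (A B : Finset α) : ℕ := ∑ i ∈ A, (B.filter (· < i)).card

theorem invCount_union_left [DecidableEq α] {A B : Finset α} (C : Finset α) (h : Disjoint A B) :
    invCount (A ∪ B) C = invCount A C + invCount B C :=
  sum_union h

theorem invCount_union_right [DecidableEq α] (A : Finset α) {B C : Finset α} (h : Disjoint B C) :
    invCount A (B ∪ C) = invCount A B + invCount A C := by
  simp only [invCount, ← sum_add_distrib, filter_union]
  exact sum_congr rfl fun i _ => card_union_of_disjoint (disjoint_filter_filter h)

theorem invCount_add_invCount {A B : Finset α} (h : Disjoint A B) :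
    invCount A B + invCount B A = A.card * B.card := by
  simp only [invCount, card_filter]
  rw [sum_comm (s := B), ← sum_add_distrib, card_eq_sum_ones A, sum_mul]
  refine sum_congr rfl fun i hi => ?_
  rw [← sum_add_distrib, one_mul, card_eq_sum_ones]
  refine sum_congr rfl fun j hj => ?_
  have hne : j ≠ i := fun e => disjoint_left.mp h hi (e ▸ hj)
  rcases hne.lt_or_gt with hlt | hgt
  · simp [hlt, hlt.not_gt]
  · simp [hgt, hgt.not_gt]

theorem invCount_union_union_add [DecidableEq α] {T U : Finset α} (h : Disjoint T U) :
    invCount (T ∪ U) (T ∪ U) + invCount T U =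
      T.card * U.card + invCount U U + invCount T (T ∪ U) := by
  rw [← invCount_add_invCount h, invCount_union_left _ h, invCount_union_right _ h,
    invCount_union_right _ h]
  ring

end Finset

open Finset

section Superspace

variable {r : ℕ}

theorem iotaSet_insert_of_lt {i : Fin r} {S : Finset (Fin r)} (h : ∀ j ∈ S, i < j)
    (g : SupSp r) : iotaSet (insert i S) g = contrOne i (iotaSet S g) := by
  rw [iotaSet, sort_insert _ (fun j hj => (h j hj).le) fun hi => lt_irrefl i (h i hi)]
  rfl

theorem iotaSet_apply (S : Finset (Fin r)) (g : SupSp r) (U : Finset (Fin r)) :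
    iotaSet S g U =
      if Disjoint S U then ((-1 : ℂ) ^ invCount S (S ∪ U)) • g (S ∪ U) else 0 := by
  induction S using Finset.induction_on_min generalizing U with
  | empty => simp [iotaSet, invCount]
  | insert i S hi ih =>
    have hiS : i ∉ S := fun h => lt_irrefl i (hi i h)
    rw [iotaSet_insert_of_lt hi, contrOne]
    by_cases hiU : i ∈ U
    · simp [hiU]
    have hdisj : Disjoint S (insert i U) ↔ Disjoint (insert i S) U := by
      simp [disjoint_insert_left, disjoint_insert_right, hiS, hiU]
    have hunion : S ∪ insert i U = insert i S ∪ U := by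
      rw [union_insert, insert_union]
    have hbelow : ((insert i S ∪ U).filter (· < i)).card = (U.filter (· < i)).card := by
      congr 1
      ext t
      simp only [mem_filter, mem_union, mem_insert]
      constructor
      · rintro ⟨(rfl | ht) | ht, hti⟩
        exacts [absurd hti (lt_irrefl t), absurd hti (hi t ht).not_gt, ⟨ht, hti⟩]
      · exact fun ⟨ht, hti⟩ => ⟨Or.inr ht, hti⟩
    rw [if_neg hiU, ih, hunion]
    by_cases hd : Disjoint (insert i S) U
    · rw [if_pos (hdisj.mpr hd), if_pos hd, smul_smul, ← pow_add, invCount, invCount,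
        sum_insert hiS, hbelow]
    · rw [if_neg (mt hdisj.mp hd), if_neg hd, smul_zero]

theorem odot_apply (f g : SupSp r) (U : Finset (Fin r)) :
    odot f g U = ∑ T, if Disjoint T U then
      ((-1 : ℂ) ^ invCount T (T ∪ U)) • diffOp (f T) (g (T ∪ U)) else 0 := by
  simp only [odot, Finset.sum_apply, Pi.smul_apply]
  refine sum_congr rfl fun T _ => ?_
  have hdiffOp : ∑ m ∈ (f T).support, coeff m (f T) • derivMon m (iotaSet T g U) =
      diffOp (f T) (iotaSet T g U) := by
    rw [diffOp_apply, LinearMap.sum_apply]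
    rfl
  rw [hdiffOp, iotaSet_apply, apply_ite (diffOp (f T)), map_smul, map_zero]

theorem spair_eq_sum (F G : SupSp r) :
    spair F G = ∑ S, (-1 : ℂ) ^ invCount S S * coeff 0 (diffOp (F S) (G S)) := by
  simp [spair, odot_apply, coeff_sum]

theorem diffOp_smul' (f h : SupSp r) (S : Finset (Fin r)) :
    diffOp (smul' f h S) = ∑ T ∈ S.powerset,
      (-1 : ℂ) ^ invCount T (S \ T) • (diffOp (h (S \ T)) * diffOp (f T)) := by
  simp only [smul', map_sum, map_smul]
  refine sum_congr rfl fun T _ => ?_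
  rw [mul_comm, diffOp_mul]
  rfl

theorem spair_smul'_eq_sum (f h g : SupSp r) :
    spair (smul' f h) g = ∑ T, ∑ U, if Disjoint T U then
      (-1 : ℂ) ^ (invCount (T ∪ U) (T ∪ U) + invCount T U) *
        coeff 0 (diffOp (h U) (diffOp (f T) (g (T ∪ U)))) else 0 := by
  simp only [spair_eq_sum, diffOp_smul', LinearMap.sum_apply, LinearMap.smul_apply,
    Module.End.mul_apply, coeff_sum, coeff_smul, smul_eq_mul, mul_sum]
  rw [sum_powerset_eq_sum_disjoint]
  refine sum_congr rfl fun T _ => sum_congr rfl fun U _ => ?_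
  split_ifs with hTU
  · rw [union_sdiff_cancel_left hTU, pow_add, mul_assoc]
  · rfl

theorem spair_odot_eq_sum (f h g : SupSp r) :
    spair h (odot f g) = ∑ T, ∑ U, if Disjoint T U then
      (-1 : ℂ) ^ (invCount U U + invCount T (T ∪ U)) *
        coeff 0 (diffOp (h U) (diffOp (f T) (g (T ∪ U)))) else 0 := by
  simp only [spair_eq_sum, odot_apply, map_sum, apply_ite, map_smul, map_zero, coeff_sum,
    coeff_smul, smul_eq_mul, coeff_zero, mul_sum, mul_zero]
  rw [sum_comm]
  refine sum_congr rfl fun T _ => sum_congr rfl fun U _ => ?_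
  rw [pow_add, mul_assoc]

theorem BiHom.card_eq {a b : ℕ} {ω : SupSp r} (hω : BiHom a b ω) {S : Finset (Fin r)}
    (hS : ω S ≠ 0) : S.card = b :=
  not_not.mp fun h => hS ((hω S).2 h)

theorem pairing_term_sign {a b c d : ℕ} {f g : SupSp r} (hf : BiHom a b f) (hg : BiHom c d g)
    (h : SupSp r) {T U : Finset (Fin r)} (hTU : Disjoint T U) :
    (-1 : ℂ) ^ (invCount (T ∪ U) (T ∪ U) + invCount T U) *
        coeff 0 (diffOp (h U) (diffOp (f T) (g (T ∪ U)))) =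
      (-1 : ℂ) ^ (b * (d - b)) * ((-1 : ℂ) ^ (invCount U U + invCount T (T ∪ U)) *
        coeff 0 (diffOp (h U) (diffOp (f T) (g (T ∪ U))))) := by
  by_cases hfT : f T = 0
  · simp [hfT]
  by_cases hgTU : g (T ∪ U) = 0
  · simp [hgTU]
  have hT : T.card = b := hf.card_eq hfT
  have hU : U.card = d - b := by
    have := hg.card_eq hgTU
    rw [card_union_of_disjoint hTU] at this
    omega
  rw [invCount_union_union_add hTU, hT, hU, pow_add, pow_add, pow_add]
  ring

end Superspace

/-- For a bihomogeneous `f ∈ Ψ_L` of bidegree `(a,b)`, the adjoint of left multiplication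
by `f` with respect to the constant-term pairing is `(-1)^{b(d-b)} (f ⊙ -)` on the
bigraded component `Ψ_{L^*}^{c,d}`. -/
theorem stmt4 (r a b c d : ℕ) (f : SupSp r) (hf : BiHom a b f)
    (h : SupSp r) (g : SupSp r) (hg : BiHom c d g) :
    spair (smul' f h) g = (-1 : ℂ) ^ (b * (d - b)) * spair h (odot f g) := by
  rw [spair_smul'_eq_sum, spair_odot_eq_sum, mul_sum]
  refine sum_congr rfl fun T _ => ?_
  rw [mul_sum]
  refine sum_congr rfl fun U _ => ?_
  split_ifs with hTU
  · exact pairing_term_sign hf hg h hTU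
  · rw [mul_zero]
end

section
/- Let T_M(x,y) be the Tutte polynomial of a matroid M of rank r on ground set of size n, with coefficients t_{i,j} (coefficient of x^i y^j). Then for each 1 ≤ k ≤ n−1: Σ_{i=0}^{k} (−1)^i Σ_{u=0}^{r−k+i} binomial(r−u, k−i) · t_{u, n−r−i} = 0. -/
open MvPolynomial

/-- The Tutte polynomial of a matroid on `Fin n` given by its rank function, in
variables `x = X 0`, `y = X 1`: `T = ∑_{A⊆E} (x-1)^{r-rk A} (y-1)^{|A|-rk A}`. -/
noncomputable def tuttePoly (n r : ℕ) (rk : Finset (Fin n) → ℕ) : MvPolynomial (Fin 2) ℤ :=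
  ∑ A : Finset (Fin n), (X 0 - 1) ^ (r - rk A) * (X 1 - 1) ^ (A.card - rk A)

/-- The coefficient `t_{u,j}` of `x^u y^j` in the Tutte polynomial, with the
convention that it vanishes for negative `j`. -/
noncomputable def tutteCoef (n r : ℕ) (rk : Finset (Fin n) → ℕ) (u : ℕ) (j : ℤ) : ℤ :=
  if 0 ≤ j then
    (tuttePoly n r rk).coeff (Finsupp.single (0 : Fin 2) u + Finsupp.single (1 : Fin 2) j.toNat)
  else 0

/-!
Put `x = 1/p`, `y = 1/q` with `p + q = 1`. Since `1/p - 1 = q/p` and `1/q - 1 = p/q`, the term of a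
subset `A` in `p^r q^(n-r) T(1/p, 1/q)` is `p^|A| q^(n-|A|)`, so the whole expression is
`(p + q)^n = 1`. Because `T` has degree at most `r` in `x` and at most `n - r` in `y` (the nullity
bound comes from submodularity against the complement), the same expression is
`∑ t_{u,j} p^(r-u) q^(n-r-j)`, which is a polynomial in `p, q`. Taking `p = 1 + z`, `q = -z` gives
an identity in `ℤ[z]` whose right side is `1`, and its coefficient of `z^k`, `k ≥ 1`, is the
relation, after reindexing `j = n - r - i`.
-/

open Finset

lemma card_sub_rank_le {n : ℕ} {rk : Finset (Fin n) → ℕ}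
    (hcard : ∀ A, rk A ≤ A.card) (hsub : ∀ A B, rk (A ∪ B) + rk (A ∩ B) ≤ rk A + rk B)
    (A : Finset (Fin n)) : A.card - rk A ≤ n - rk univ := by
  have h := hsub A Aᶜ
  rw [union_compl, inter_compl] at h
  have hc := hcard Aᶜ
  rw [card_compl, Fintype.card_fin] at hc
  have hA : A.card ≤ n := by simpa using A.card_le_univ
  omega

lemma degreeOf_X_sub_one_pow_le {σ R : Type*} [CommRing R] [Nontrivial R] [DecidableEq σ]
    (i j : σ) (k : ℕ) :
    degreeOf i ((X j - 1 : MvPolynomial σ R) ^ k) ≤ if i = j then k else 0 := by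
  calc degreeOf i ((X j - 1 : MvPolynomial σ R) ^ k)
      ≤ k * degreeOf i (X j - 1 : MvPolynomial σ R) := degreeOf_pow_le _ _ _
    _ ≤ k * if i = j then 1 else 0 := by
        gcongr
        simpa [degreeOf_X] using degreeOf_sub_le i (X j : MvPolynomial σ R) 1
    _ = if i = j then k else 0 := by split_ifs <;> simp

lemma le_of_mem_support_tuttePoly {n : ℕ} {rk : Finset (Fin n) → ℕ}
    (hcard : ∀ A, rk A ≤ A.card) (hsub : ∀ A B, rk (A ∪ B) + rk (A ∩ B) ≤ rk A + rk B) :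
    ∀ d ∈ (tuttePoly n (rk univ) rk).support, d 0 ≤ rk univ ∧ d 1 ≤ n - rk univ := by
  intro d hd
  have hdeg := degreeOf_X_sub_one_pow_le (R := ℤ) (σ := Fin 2)
  refine ⟨degreeOf_le_iff.mp ?_ d hd, degreeOf_le_iff.mp ?_ d hd⟩ <;>
    refine (degreeOf_sum_le _ _ _).trans (Finset.sup_le fun A _ => (degreeOf_mul_le _ _ _).trans ?_)
  · calc _ ≤ (rk univ - rk A) + 0 :=
          add_le_add (by simpa using hdeg 0 0 _) (by simpa using hdeg 0 1 _)
      _ ≤ rk univ := by omega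
  · calc _ ≤ 0 + (A.card - rk A) :=
          add_le_add (by simpa using hdeg 1 0 _) (by simpa using hdeg 1 1 _)
      _ ≤ n - rk univ := by simpa using card_sub_rank_le hcard hsub A

lemma eval₂_eq_sum_range_sum_range {R S : Type*} [CommSemiring R] [CommSemiring S]
    (φ : R →+* S) (g : Fin 2 → S) (f : MvPolynomial (Fin 2) R) {a b : ℕ}
    (hf : ∀ d ∈ f.support, d 0 ≤ a ∧ d 1 ≤ b) :
    eval₂ φ g f = ∑ u ∈ range (a + 1), ∑ j ∈ range (b + 1),
      φ (f.coeff (Finsupp.single 0 u + Finsupp.single 1 j)) * (g 0 ^ u * g 1 ^ j) := by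
  set e : ℕ × ℕ → Fin 2 →₀ ℕ := fun uj => Finsupp.single 0 uj.1 + Finsupp.single 1 uj.2
  have he : ∀ uj, e uj 0 = uj.1 ∧ e uj 1 = uj.2 := fun uj => by simp [e]
  have he_inj : Set.InjOn e ↑(range (a + 1) ×ˢ range (b + 1)) := fun x _ y _ hxy =>
    Prod.ext (by rw [← (he x).1, ← (he y).1, hxy]) (by rw [← (he x).2, ← (he y).2, hxy])
  have hsupp : f.support ⊆ (range (a + 1) ×ˢ range (b + 1)).image e := fun d hd => by
    refine mem_image.mpr ⟨(d 0, d 1), ?_, ?_⟩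
    · have := hf d hd
      simp only [mem_product, mem_range]
      omega
    · ext i
      fin_cases i <;> simp [e]
  rw [eval₂_eq', sum_subset hsupp fun d _ hd => by simp [notMem_support_iff.mp hd],
    sum_image he_inj, sum_product]
  simp only [Fin.prod_univ_two, he]
  rfl

lemma pow_mul_mul_inv_pow {K : Type*} [Field K] {x : K} (hx : x ≠ 0) (y : K) {m k : ℕ}
    (h : k ≤ m) : x ^ m * (y * x⁻¹) ^ k = x ^ (m - k) * y ^ k := by
  rw [mul_pow, inv_pow, ← Nat.sub_add_cancel h, pow_add, Nat.add_sub_cancel]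
  field_simp

theorem sum_tuttePoly_coeff_mul_pow_eq_one {K : Type*} [Field K] {n r : ℕ}
    {rk : Finset (Fin n) → ℕ} (hcard : ∀ A, rk A ≤ A.card)
    (hmono : ∀ A B, A ⊆ B → rk A ≤ rk B)
    (hsub : ∀ A B, rk (A ∪ B) + rk (A ∩ B) ≤ rk A + rk B) (hrk : rk univ = r)
    {p q : K} (hp : p ≠ 0) (hq : q ≠ 0) (hpq : p + q = 1) :
    ∑ u ∈ range (r + 1), ∑ j ∈ range (n - r + 1),
      (((tuttePoly n r rk).coeff (Finsupp.single (0 : Fin 2) u + Finsupp.single 1 j) : ℤ) : K) *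
        (p ^ (r - u) * q ^ (n - r - j)) = 1 := by
  subst hrk
  have hx : p⁻¹ - 1 = q * p⁻¹ := by field_simp; linear_combination -hpq
  have hy : q⁻¹ - 1 = p * q⁻¹ := by field_simp; linear_combination -hpq
  have hterm : ∀ A : Finset (Fin n),
      p ^ rk univ * q ^ (n - rk univ) *
          ((q * p⁻¹) ^ (rk univ - rk A) * (p * q⁻¹) ^ (A.card - rk A)) =
        p ^ A.card * q ^ (n - A.card) := fun A => by
    have hAr := hmono A univ (subset_univ A)
    have hAc := hcard A
    have hnull := card_sub_rank_le hcard hsub A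
    have hrn : rk univ ≤ n := by simpa using hcard univ
    rw [mul_mul_mul_comm, pow_mul_mul_inv_pow hp _ (Nat.sub_le _ _),
      pow_mul_mul_inv_pow hq _ hnull]
    calc p ^ (rk univ - (rk univ - rk A)) * q ^ (rk univ - rk A) *
          (q ^ (n - rk univ - (A.card - rk A)) * p ^ (A.card - rk A))
        = p ^ (rk univ - (rk univ - rk A) + (A.card - rk A)) *
            q ^ (rk univ - rk A + (n - rk univ - (A.card - rk A))) := by ring
      _ = p ^ A.card * q ^ (n - A.card) := by congr 2 <;> omega
  calc _ = p ^ rk univ * q ^ (n - rk univ) *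
        ∑ u ∈ range (rk univ + 1), ∑ j ∈ range (n - rk univ + 1),
          (((tuttePoly n (rk univ) rk).coeff
            (Finsupp.single (0 : Fin 2) u + Finsupp.single 1 j) : ℤ) : K) *
          (p⁻¹ ^ u * q⁻¹ ^ j) := by
        simp only [mul_sum]
        refine sum_congr rfl fun u hu => sum_congr rfl fun j hj => ?_
        rw [mem_range, Nat.lt_succ_iff] at hu hj
        rw [pow_sub₀ p hp hu, pow_sub₀ q hq hj]
        ring
    _ = p ^ rk univ * q ^ (n - rk univ) * aeval ![p⁻¹, q⁻¹] (tuttePoly n (rk univ) rk) := by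
        rw [aeval_def,
          eval₂_eq_sum_range_sum_range _ _ _ (le_of_mem_support_tuttePoly hcard hsub)]
        simp only [eq_intCast, Matrix.cons_val_zero, Matrix.cons_val_one]
    _ = ∑ A : Finset (Fin n), p ^ A.card * q ^ (n - A.card) := by
        simp [tuttePoly, mul_sum, hx, hy, hterm]
    _ = 1 := by rw [Fin.sum_pow_mul_eq_add_pow, hpq, one_pow]

lemma coeff_one_add_X_pow_mul_neg_X_pow {R : Type*} [CommRing R] (m e k : ℕ) :
    ((1 + Polynomial.X) ^ m * (-Polynomial.X) ^ e : Polynomial R).coeff k =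
      if e ≤ k then (-1) ^ e * (m.choose (k - e) : R) else 0 := by
  have h : (-Polynomial.X : Polynomial R) ^ e =
      Polynomial.C ((-1 : R) ^ e) * Polynomial.X ^ e := by
    rw [neg_pow, Polynomial.C_pow, Polynomial.C_neg, Polynomial.C_1]
  rw [h, mul_left_comm, Polynomial.coeff_C_mul, Polynomial.coeff_mul_X_pow']
  split_ifs
  · rw [Polynomial.coeff_one_add_X_pow]
  · rw [mul_zero]

theorem sum_tuttePoly_coeff_mul_one_add_X_pow_eq_one {n r : ℕ}
    {rk : Finset (Fin n) → ℕ} (hcard : ∀ A, rk A ≤ A.card)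
    (hmono : ∀ A B, A ⊆ B → rk A ≤ rk B)
    (hsub : ∀ A B, rk (A ∪ B) + rk (A ∩ B) ≤ rk A + rk B) (hrk : rk univ = r) :
    ∑ u ∈ range (r + 1), ∑ j ∈ range (n - r + 1),
      (((tuttePoly n r rk).coeff (Finsupp.single (0 : Fin 2) u + Finsupp.single 1 j) : ℤ) :
          Polynomial ℤ) *
        ((1 + Polynomial.X) ^ (r - u) * (-Polynomial.X) ^ (n - r - j)) = 1 := by
  set ι := algebraMap (Polynomial ℤ) (FractionRing (Polynomial ℤ))
  have hι : Function.Injective ι := IsFractionRing.injective _ _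
  have hp : ι (1 + Polynomial.X) ≠ 0 := (map_ne_zero_iff _ hι).mpr <| by
    simpa [add_comm] using Polynomial.X_add_C_ne_zero (1 : ℤ)
  have hq : ι (-Polynomial.X) ≠ 0 :=
    (map_ne_zero_iff _ hι).mpr (neg_ne_zero.mpr Polynomial.X_ne_zero)
  apply hι
  simp only [map_sum, map_mul, map_pow, map_intCast, map_one]
  exact sum_tuttePoly_coeff_mul_pow_eq_one hcard hmono hsub hrk hp hq (by simp)

theorem sum_tuttePoly_coeff_mul_choose_eq_zero {n r : ℕ}
    {rk : Finset (Fin n) → ℕ} (hcard : ∀ A, rk A ≤ A.card)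
    (hmono : ∀ A B, A ⊆ B → rk A ≤ rk B)
    (hsub : ∀ A B, rk (A ∪ B) + rk (A ∩ B) ≤ rk A + rk B) (hrk : rk univ = r)
    {k : ℕ} (hk : k ≠ 0) :
    ∑ u ∈ range (r + 1), ∑ i ∈ range (n - r + 1),
      (if i ≤ k then
        (tuttePoly n r rk).coeff (Finsupp.single (0 : Fin 2) u + Finsupp.single 1 (n - r - i)) *
          ((-1) ^ i * ((r - u).choose (k - i) : ℤ))
      else 0) = 0 := by
  have h := congrArg (Polynomial.coeff · k)
    (sum_tuttePoly_coeff_mul_one_add_X_pow_eq_one hcard hmono hsub hrk)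
  simp only [Polynomial.finsetSum_coeff, Polynomial.coeff_intCast_mul, Int.cast_id,
    coeff_one_add_X_pow_mul_neg_X_pow, Polynomial.coeff_one, hk, if_false] at h
  refine Eq.trans ?_ h
  refine sum_congr rfl fun u _ => ?_
  rw [← sum_range_reflect]
  refine sum_congr rfl fun i hi => ?_
  rw [mem_range] at hi
  rw [Nat.add_sub_cancel, Nat.sub_sub_self (by omega), mul_ite, mul_zero]

lemma tutteCoef_natCast_sub_sub {n r : ℕ} (rk : Finset (Fin n) → ℕ) (hrn : r ≤ n)
    (u i : ℕ) :
    tutteCoef n r rk u ((n : ℤ) - r - i) =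
      if i ≤ n - r then
        (tuttePoly n r rk).coeff (Finsupp.single (0 : Fin 2) u + Finsupp.single 1 (n - r - i))
      else 0 := by
  unfold tutteCoef
  split_ifs
  · congr; omega
  · omega
  · omega
  · rfl

lemma sum_range_toNat_choose_mul (g : ℕ → ℤ) {r k i : ℕ} (hik : i ≤ k) :
    ∑ u ∈ range (((r : ℤ) - k + i + 1).toNat), ((r - u).choose (k - i) : ℤ) * g u =
      ∑ u ∈ range (r + 1), ((r - u).choose (k - i) : ℤ) * g u := by
  refine sum_subset (range_subset_range.mpr (by omega)) fun u hu hu' => ?_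
  rw [mem_range] at hu hu'
  rw [Nat.choose_eq_zero_of_lt (by omega), Nat.cast_zero, zero_mul]

lemma sum_range_ite_le {M : Type*} [AddCommMonoid M] (f : ℕ → M) (a b : ℕ) :
    ∑ i ∈ range (a + 1), (if i ≤ b then f i else 0) = ∑ i ∈ range (min a b + 1), f i := by
  rw [← sum_filter]
  congr 1
  ext i
  simp only [mem_filter, mem_range]
  omega

/-- Brylawski's linear relations among the coefficients of the Tutte polynomial:
for `1 ≤ k ≤ n-1`, `∑_{i=0}^{k} (-1)^i ∑_{u=0}^{r-k+i} C(r-u, k-i) t_{u, n-r-i} = 0`. -/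
theorem stmt9 (n r : ℕ) (rk : Finset (Fin n) → ℕ)
    (hcard : ∀ A, rk A ≤ A.card)
    (hmono : ∀ A B, A ⊆ B → rk A ≤ rk B)
    (hsub : ∀ A B, rk (A ∪ B) + rk (A ∩ B) ≤ rk A + rk B)
    (hrk : rk Finset.univ = r) :
    ∀ k : ℕ, 1 ≤ k → k ≤ n - 1 →
      ∑ i ∈ Finset.range (k + 1), (-1 : ℤ) ^ i *
        ∑ u ∈ Finset.range (((r : ℤ) - k + i + 1).toNat),
          ((r - u).choose (k - i) : ℤ) * tutteCoef n r rk u ((n : ℤ) - r - i) = 0 := by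
  intro k hk _
  have hrn : r ≤ n := by simpa [hrk] using hcard univ
  calc _ = ∑ i ∈ range (k + 1), ∑ u ∈ range (r + 1),
        (if i ≤ n - r then
          (tuttePoly n r rk).coeff (Finsupp.single (0 : Fin 2) u + Finsupp.single 1 (n - r - i)) *
            ((-1) ^ i * ((r - u).choose (k - i) : ℤ))
        else 0) := by
        refine sum_congr rfl fun i hi => ?_
        rw [sum_range_toNat_choose_mul _ (Nat.lt_succ_iff.mp (mem_range.mp hi)), mul_sum]
        refine sum_congr rfl fun u _ => ?_
        rw [tutteCoef_natCast_sub_sub rk hrn]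
        split_ifs <;> ring
    _ = ∑ u ∈ range (r + 1), ∑ i ∈ range (n - r + 1),
        (if i ≤ k then
          (tuttePoly n r rk).coeff (Finsupp.single (0 : Fin 2) u + Finsupp.single 1 (n - r - i)) *
            ((-1) ^ i * ((r - u).choose (k - i) : ℤ))
        else 0) := by
        rw [sum_comm]
        refine sum_congr rfl fun u _ => ?_
        rw [sum_range_ite_le, sum_range_ite_le, min_comm]
    _ = 0 := sum_tuttePoly_coeff_mul_choose_eq_zero hcard hmono hsub hrk (by omega)
end

section
/- Let L ⊆ C^n be an essential hyperplane arrangement of rank r in a vector space of dimension r, and for nonzero v ∈ L let ρ(v) be the number of hyperplanes H_i not containing v. A cocircuit vector is a nonzero element of a one-dimensional flat subspace L_F (F a flat of rank r−1). Then for every integer k ≤ 0, the ideal (v^{ρ(v)+k+1} : v ∈ L∖{0}) of Sym(L) is generated by the subset {v^{ρ(v)+k+1} : v a cocircuit vector}. -/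
open MvPolynomial

/-- The number `ρ(v)` of hyperplanes (kernels of the linear forms `ℓ i`) not
containing `v`. -/
noncomputable def rho {r n : ℕ} (l : Fin n → ((Fin r → ℂ) →ₗ[ℂ] ℂ)) (v : Fin r → ℂ) : ℕ :=
  Nat.card {i : Fin n // l i v ≠ 0}

/-- The image of `v ∈ L` in `Sym L`, as a linear polynomial. -/
noncomputable def linPoly {r : ℕ} (v : Fin r → ℂ) : MvPolynomial (Fin r) ℂ :=
  ∑ j : Fin r, C (v j) * X j

/-- `v` is a cocircuit vector: a nonzero vector spanning a one-dimensional flat subspace,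
i.e. any `w` vanishing on all hyperplanes containing `v` is a multiple of `v`. -/
def IsCocircuitVec {r n : ℕ} (l : Fin n → ((Fin r → ℂ) →ₗ[ℂ] ℂ)) (v : Fin r → ℂ) : Prop :=
  v ≠ 0 ∧ ∀ w : Fin r → ℂ, (∀ i : Fin n, l i v = 0 → l i w = 0) → ∃ c : ℂ, w = c • v

/-!
Induct on the flat subspace spanned by `v`. If it is the line `ℂ v`, then `v` is a cocircuit
vector. Otherwise choose `y` in it, off that line and off every hyperplane not containing `v`.
The line `v + t y` meets those hyperplanes at finitely many parameters `t`, where it lies in a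
strictly smaller flat and `ρ` drops by the number `m_t` of hyperplanes met there. Put
`N = ρ(v) + k + 1`. A linear functional `φ` that kills every `(v + t y)^(N-i) y^i` with
`i ≤ min(m_t, N)` makes `s ↦ φ((v + s y)^N)` a polynomial of degree `≤ N` vanishing to order
`min(m_t, N) + 1` at each `t`. Since `∑ m_t = ρ(v) ≥ N - 1` and, by essentiality, there are at
least two parameters, these orders add up to more than `N`; so the polynomial is zero and `v^N`
lies in the span of those products, each a multiple of `(v + t y)^(ρ(v + t y) + k + 1)`.
-/

namespace Polynomial

variable {K A : Type*} [Field K] [CommRing A] [Algebra K A]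

noncomputable def mapLinear (φ : A →ₗ[K] K) : A[X] →ₗ[K] K[X] :=
  lsum fun j => (monomial j).comp φ

theorem coeff_mapLinear (φ : A →ₗ[K] K) (P : A[X]) (j : ℕ) :
    (mapLinear φ P).coeff j = φ (P.coeff j) := by
  simp only [mapLinear, lsum_apply, LinearMap.comp_apply, sum_def, finsetSum_coeff,
    coeff_monomial, Finset.sum_ite_eq']
  split_ifs with h
  · rfl
  · rw [notMem_support_iff.1 h, map_zero]

theorem mapLinear_map_mul_C (φ : A →ₗ[K] K) (q : K[X]) (a : A) :
    mapLinear φ (q.map (algebraMap K A) * C a) = q * C (φ a) := by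
  ext j
  rw [coeff_mapLinear, coeff_mul_C, coeff_mul_C, coeff_map, ← Algebra.smul_def, map_smul,
    smul_eq_mul]

theorem X_sub_C_pow_dvd_mapLinear (φ : A →ₗ[K] K) (a b : A) (N e : ℕ) (t : K)
    (hφ : ∀ i ≤ e, φ ((a + t • b) ^ (N - i) * b ^ i) = 0) :
    (X - C t) ^ (e + 1) ∣ mapLinear φ ((C a + X * C b) ^ N) := by
  -- Taylor expansion of `C a + X * C b` around `X = t`.
  have hsplit : C a + X * C b = (X - C (algebraMap K A t)) * C b + C (a + t • b) := by
    rw [Algebra.smul_def, C_add, C_mul]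
    ring
  have hterm : ∀ c, ((X - C (algebraMap K A t)) * C b) ^ c * C (a + t • b) ^ (N - c) *
      (N.choose c : A[X]) =
      ((X - C t) ^ c * (N.choose c : K[X])).map (algebraMap K A) *
        C ((a + t • b) ^ (N - c) * b ^ c) := by
    intro c
    simp only [Polynomial.map_mul, Polynomial.map_pow, Polynomial.map_sub, map_X, map_C,
      Polynomial.map_natCast, C_mul, C_pow, mul_pow]
    ring
  rw [hsplit, add_pow, map_sum]
  refine Finset.dvd_sum fun c _ => ?_
  rw [hterm, mapLinear_map_mul_C]
  by_cases hc : c ≤ e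
  · simp [hφ c hc]
  · exact ((pow_dvd_pow _ (by omega)).mul_right _).mul_right _

theorem eq_zero_of_natDegree_le_of_X_sub_C_pow_dvd {p : K[X]} {N : ℕ} (T : Finset K)
    (m : K → ℕ) (hdeg : p.natDegree ≤ N) (hdvd : ∀ t ∈ T, (X - C t) ^ m t ∣ p)
    (hsum : N < ∑ t ∈ T, m t) : p = 0 := by
  by_contra hp
  have hprod : ∏ t ∈ T, (X - C t) ^ m t ∣ p :=
    Finset.prod_dvd_of_coprime
      (fun s _ t _ hst => (pairwise_coprime_X_sub_C Function.injective_id hst).pow) hdvd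
  have hdeg_prod : (∏ t ∈ T, (X - C t) ^ m t).natDegree = ∑ t ∈ T, m t := by
    rw [natDegree_prod_of_monic _ _ fun t _ => (monic_X_sub_C t).pow _]
    simp
  have := natDegree_le_of_dvd hprod hp
  omega

end Polynomial

section PowerSpan

variable {K A : Type*} [Field K] [CommRing A] [Algebra K A]

open Polynomial in
theorem pow_mem_span_add_smul_pow_mul_pow (a b : A) (N : ℕ) (T : Finset K) (e : K → ℕ)
    (hsum : N + 1 ≤ ∑ t ∈ T, (e t + 1)) :
    a ^ N ∈ Submodule.span K {p | ∃ t ∈ T, ∃ i ≤ e t, p = (a + t • b) ^ (N - i) * b ^ i} := by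
  by_contra hmem
  obtain ⟨φ, hφa, hφspan⟩ := Submodule.exists_dual_map_eq_bot_of_notMem hmem inferInstance
  have hφ : ∀ t ∈ T, ∀ i ≤ e t, φ ((a + t • b) ^ (N - i) * b ^ i) = 0 := fun t ht i hi => by
    rw [← Submodule.mem_bot K, ← hφspan]
    exact Submodule.mem_map_of_mem (Submodule.subset_span ⟨t, ht, i, hi, rfl⟩)
  set P : A[X] := (Polynomial.C a + Polynomial.X * Polynomial.C b) ^ N
  have hdeg : (mapLinear φ P).natDegree ≤ N := by
    refine natDegree_le_iff_coeff_eq_zero.2 fun j hj => ?_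
    have hP : P.natDegree ≤ N := (natDegree_pow_le_of_le N (by compute_degree)).trans (by simp)
    rw [coeff_mapLinear, coeff_eq_zero_of_natDegree_lt (hP.trans_lt hj), map_zero]
  have hzero : mapLinear φ P = 0 :=
    eq_zero_of_natDegree_le_of_X_sub_C_pow_dvd T (e · + 1) hdeg
      (fun t ht => X_sub_C_pow_dvd_mapLinear φ a b N (e t) t (hφ t ht)) hsum
  apply hφa
  have h0 := congrArg (Polynomial.coeff · 0) hzero
  rw [coeff_mapLinear] at h0
  simpa [P, coeff_zero_eq_eval_zero] using h0

theorem pow_mem_of_forall_add_smul_pow_mem {J : Ideal A} (a b : A) (N : ℕ) (T : Finset K)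
    (E e : K → ℕ) (hE : ∀ t ∈ T, (a + t • b) ^ E t ∈ J) (hEe : ∀ t ∈ T, E t + e t ≤ N)
    (hsum : N + 1 ≤ ∑ t ∈ T, (e t + 1)) : a ^ N ∈ J := by
  refine (Submodule.span_le (p := J.restrictScalars K)).2 ?_
    (pow_mem_span_add_smul_pow_mul_pow a b N T e hsum)
  rintro _ ⟨t, ht, i, hi, rfl⟩
  exact J.mul_mem_right _ (J.mem_of_dvd (pow_dvd_pow _ (by have := hEe t ht; omega)) (hE t ht))

end PowerSpan

theorem Finset.add_one_le_sum_min_add_one {ι : Type*} (T : Finset ι) (m : ι → ℕ) {N : ℕ}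
    (hT : 2 ≤ T.card) (hN : N ≤ ∑ t ∈ T, m t + 1) : N + 1 ≤ ∑ t ∈ T, (min (m t) N + 1) := by
  by_cases hbig : ∃ t ∈ T, N ≤ m t
  · obtain ⟨t, ht, hNt⟩ := hbig
    calc N + 1 = min (m t) N + 1 := by rw [min_eq_right hNt]
      _ ≤ ∑ t ∈ T, (min (m t) N + 1) :=
        Finset.single_le_sum (f := fun t => min (m t) N + 1) (fun _ _ => Nat.zero_le _) ht
  · push Not at hbig
    rw [Finset.sum_congr rfl fun t ht => by rw [min_eq_left (hbig t ht).le],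
      Finset.sum_add_distrib, Finset.sum_const, smul_eq_mul, mul_one]
    omega

section Flat

variable {K V ι : Type*} [Field K] [AddCommGroup V] [Module K V]

theorem Submodule.exists_mem_forall_notMem [Infinite K] [Finite ι] {W : Submodule K V}
    {p : ι → Submodule K V} (h : ∀ i, ¬ W ≤ p i) : ∃ y ∈ W, ∀ i, y ∉ p i := by
  by_contra! hcover
  obtain ⟨i, hi⟩ :=
    Subspace.exists_eq_top_of_iUnion_eq_univ (p := fun i => (p i).comap W.subtype)
      (Set.eq_univ_of_forall fun y => Set.mem_iUnion.2 (hcover y y.2))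
  exact h i fun y hy => (Submodule.eq_top_iff'.1 hi ⟨y, hy⟩ : _)

theorem LinearMap.apply_add_smul_eq_zero_iff (f : V →ₗ[K] K) {v y : V} (hy : f y ≠ 0) (t : K) :
    f (v + t • y) = 0 ↔ t = -f v / f y := by
  rw [map_add, map_smul, smul_eq_mul, eq_div_iff hy]
  constructor <;> intro h <;> linear_combination h

theorem add_smul_ne_zero_of_notMem_span {v y : V} (hv : v ≠ 0) (hy : y ∉ K ∙ v) (t : K) :
    v + t • y ≠ 0 := by
  intro h
  by_cases ht : t = 0
  · simp [ht, hv] at h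
  · refine hy (Submodule.mem_span_singleton.2 ⟨-t⁻¹, ?_⟩)
    rw [eq_neg_of_add_eq_zero_left h, smul_neg, neg_smul, neg_neg, smul_smul, inv_mul_cancel₀ ht,
      one_smul]

variable (l : ι → V →ₗ[K] K)

-- The subspace `L_F` of the flat `F = {i | l i v = 0}`: the smallest flat subspace containing `v`.
def flatClosure (v : V) : Submodule K V :=
  ⨅ (i) (_ : l i v = 0), LinearMap.ker (l i)

variable {l}

theorem mem_flatClosure {v w : V} : w ∈ flatClosure l v ↔ ∀ i, l i v = 0 → l i w = 0 := by
  simp [flatClosure, Submodule.mem_iInf]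

theorem self_mem_flatClosure (v : V) : v ∈ flatClosure l v :=
  mem_flatClosure.2 fun _ h => h

theorem flatClosure_lt_flatClosure {v w : V} (hw : w ∈ flatClosure l v) {i : ι}
    (hvi : l i v ≠ 0) (hwi : l i w = 0) : flatClosure l w < flatClosure l v := by
  refine lt_of_le_of_ne (fun u hu => mem_flatClosure.2 fun j hj => ?_) fun heq => ?_
  · exact mem_flatClosure.1 hu j (mem_flatClosure.1 hw j hj)
  · exact hvi (mem_flatClosure.1 (heq ▸ self_mem_flatClosure v) i hwi)

theorem exists_mem_flatClosure_forall_ne_zero [Infinite K] [Finite ι] {v : V}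
    (hv : ¬ flatClosure l v ≤ K ∙ v) :
    ∃ y ∈ flatClosure l v, y ∉ K ∙ v ∧ ∀ i, l i v ≠ 0 → l i y ≠ 0 := by
  obtain ⟨y, hyv, hy⟩ := Submodule.exists_mem_forall_notMem
    (p := fun o : Option {i // l i v ≠ 0} => o.elim (K ∙ v) fun i => LinearMap.ker (l i))
    (W := flatClosure l v) fun
      | none => hv
      | some i => fun hle => i.2 (hle (self_mem_flatClosure v))
  exact ⟨y, hyv, hy none, fun i hi => hy (some ⟨i, hi⟩)⟩

end Flat

section Arrangement

open Finset

variable {r n : ℕ} {l : Fin n → ((Fin r → ℂ) →ₗ[ℂ] ℂ)}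

variable (l) in
theorem rho_eq_card (v : Fin r → ℂ) : rho l v = #{i | l i v ≠ 0} := by
  rw [rho, Nat.card_eq_fintype_card, Fintype.card_subtype]

theorem rho_add_card_eq {v w : Fin r → ℂ} (hw : w ∈ flatClosure l v) :
    rho l w + #{i | l i v ≠ 0 ∧ l i w = 0} = rho l v := by
  have hsupp : univ.filter (fun i => l i w ≠ 0) =
      (univ.filter fun i => l i v ≠ 0).filter fun i => l i w ≠ 0 := by
    ext i
    simp only [Finset.mem_filter, Finset.mem_univ, true_and]
    exact ⟨fun h => ⟨fun hv => h (mem_flatClosure.1 hw i hv), h⟩, And.right⟩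
  rw [rho_eq_card, rho_eq_card, hsupp,
    ← card_filter_add_card_filter_not (s := univ.filter fun i => l i v ≠ 0) (fun i => l i w ≠ 0),
    filter_filter, filter_filter]
  simp only [not_not]

theorem linPoly_add_smul (v y : Fin r → ℂ) (t : ℂ) :
    linPoly (v + t • y) = linPoly v + t • linPoly y := by
  simp only [linPoly, Pi.add_apply, Pi.smul_apply, smul_eq_mul, C_add, C_mul, add_mul,
    sum_add_distrib, smul_sum, smul_eq_C_mul, mul_assoc]

theorem isCocircuitVec_of_flatClosure_le {v : Fin r → ℂ} (hv : v ≠ 0)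
    (h : flatClosure l v ≤ ℂ ∙ v) : IsCocircuitVec l v :=
  ⟨hv, fun w hw => by
    obtain ⟨c, hc⟩ := Submodule.mem_span_singleton.1 (h (mem_flatClosure.2 hw))
    exact ⟨c, hc.symm⟩⟩

-- The parameters `t` at which the line `v + t • y` meets a hyperplane not containing `v`.
variable (l) in
noncomputable def lineHits (v y : Fin r → ℂ) : Finset ℂ :=
  (univ.filter fun i => l i v ≠ 0).image fun i => -l i v / l i y

theorem one_lt_card_lineHits (hess : ∀ x : Fin r → ℂ, (∀ i, l i x = 0) → x = 0)
    {v y : Fin r → ℂ} (hv : v ≠ 0) (hyv : y ∈ flatClosure l v) (hy : y ∉ ℂ ∙ v)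
    (hgen : ∀ i, l i v ≠ 0 → l i y ≠ 0) : 1 < (lineHits l v y).card := by
  have hsupp : ∀ x ≠ 0, ∃ i, l i x ≠ 0 := fun x hx => by
    by_contra! h
    exact hx (hess x h)
  obtain ⟨i₀, hi₀⟩ := hsupp v hv
  set t₀ := -l i₀ v / l i₀ y
  obtain ⟨i₁, hi₁⟩ := hsupp _ (add_smul_ne_zero_of_notMem_span hv hy t₀)
  have hvi₁ : l i₁ v ≠ 0 := fun h => hi₁ (mem_flatClosure.1
    (add_mem (self_mem_flatClosure v) (Submodule.smul_mem _ t₀ hyv)) i₁ h)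
  refine one_lt_card.2 ⟨t₀, mem_image_of_mem _ (by simpa using hi₀), -l i₁ v / l i₁ y,
    mem_image_of_mem _ (by simpa using hvi₁), fun h => hi₁ ?_⟩
  exact ((l i₁).apply_add_smul_eq_zero_iff (hgen i₁ hvi₁) t₀).2 h

theorem linPoly_pow_mem_of_lineHits (hess : ∀ x : Fin r → ℂ, (∀ i, l i x = 0) → x = 0)
    {k : ℤ} (hk : k ≤ 0) {J : Ideal (MvPolynomial (Fin r) ℂ)} {v y : Fin r → ℂ} (hv : v ≠ 0)
    (hyv : y ∈ flatClosure l v) (hy : y ∉ ℂ ∙ v) (hgen : ∀ i, l i v ≠ 0 → l i y ≠ 0)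
    (hJ : ∀ t ∈ lineHits l v y,
      linPoly (v + t • y) ^ ((rho l (v + t • y) : ℤ) + k + 1).toNat ∈ J) :
    linPoly v ^ ((rho l v : ℤ) + k + 1).toNat ∈ J := by
  set S := univ.filter fun i => l i v ≠ 0
  set hit : Fin n → ℂ := fun i => -l i v / l i y
  set m : ℂ → ℕ := fun t => #{i | l i v ≠ 0 ∧ l i (v + t • y) = 0}
  have hm : ∀ t, m t = #{i ∈ S | hit i = t} := fun t => by
    simp only [m, S, filter_filter]
    congr 1
    refine filter_congr fun i _ => and_congr_right fun hi => ?_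
    exact ((l i).apply_add_smul_eq_zero_iff (hgen i hi) t).trans eq_comm
  have hsum : ∑ t ∈ lineHits l v y, m t = rho l v := by
    rw [rho_eq_card, card_eq_sum_card_image hit S]
    exact sum_congr rfl fun t _ => hm t
  have hcount : ∀ t : ℂ, rho l (v + t • y) + m t = rho l v := fun t =>
    rho_add_card_eq (add_mem (self_mem_flatClosure v) (Submodule.smul_mem _ t hyv))
  refine pow_mem_of_forall_add_smul_pow_mem (linPoly v) (linPoly y) _ (lineHits l v y)
    (fun t => ((rho l (v + t • y) : ℤ) + k + 1).toNat)
    (fun t => min (m t) ((rho l v : ℤ) + k + 1).toNat)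
    (fun t ht => linPoly_add_smul v y t ▸ hJ t ht) (fun t _ => by have := hcount t; omega) ?_
  exact add_one_le_sum_min_add_one _ m (one_lt_card_lineHits hess hv hyv hy hgen) (by omega)

end Arrangement

theorem linPoly_pow_mem_span_cocircuit {r n : ℕ} {l : Fin n → ((Fin r → ℂ) →ₗ[ℂ] ℂ)}
    (hess : ∀ x : Fin r → ℂ, (∀ i, l i x = 0) → x = 0) {k : ℤ} (hk : k ≤ 0)
    {v : Fin r → ℂ} (hv : v ≠ 0) :
    linPoly v ^ ((rho l v : ℤ) + k + 1).toNat ∈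
      Ideal.span {p | ∃ v : Fin r → ℂ, IsCocircuitVec l v ∧
        p = linPoly v ^ ((rho l v : ℤ) + k + 1).toNat} := by
  induction hW : flatClosure l v using WellFoundedLT.induction generalizing v with
  | _ W ih =>
  by_cases hcoc : flatClosure l v ≤ ℂ ∙ v
  · exact Ideal.subset_span ⟨v, isCocircuitVec_of_flatClosure_le hv hcoc, rfl⟩
  obtain ⟨y, hyv, hy, hgen⟩ := exists_mem_flatClosure_forall_ne_zero hcoc
  refine linPoly_pow_mem_of_lineHits hess hk hv hyv hy hgen fun t ht => ?_
  obtain ⟨i, hi, rfl⟩ := Finset.mem_image.1 ht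
  have hvi : l i v ≠ 0 := by simpa using hi
  refine ih _ (hW ▸ flatClosure_lt_flatClosure ?_ hvi ?_)
    (add_smul_ne_zero_of_notMem_span hv hy _) rfl
  · exact add_mem (self_mem_flatClosure v) (Submodule.smul_mem _ _ hyv)
  · exact ((l i).apply_add_smul_eq_zero_iff (hgen i hvi) _).2 rfl

/-- Exponents `≤ 0` are truncated to `0` by `Int.toNat`, so the corresponding generator is `1`. -/
theorem stmt13 (r n : ℕ) (l : Fin n → ((Fin r → ℂ) →ₗ[ℂ] ℂ))
    (hess : ∀ x : Fin r → ℂ, (∀ i, l i x = 0) → x = 0)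
    (k : ℤ) (hk : k ≤ 0) :
    Ideal.span {p : MvPolynomial (Fin r) ℂ | ∃ v : Fin r → ℂ, v ≠ 0 ∧
        p = linPoly v ^ (((rho l v : ℤ) + k + 1).toNat)} =
      Ideal.span {p : MvPolynomial (Fin r) ℂ | ∃ v : Fin r → ℂ, IsCocircuitVec l v ∧
        p = linPoly v ^ (((rho l v : ℤ) + k + 1).toNat)} := by
  refine le_antisymm (Ideal.span_le.2 ?_) (Ideal.span_mono ?_)
  · rintro _ ⟨v, hv, rfl⟩
    exact linPoly_pow_mem_span_cocircuit hess hk hv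
  · rintro _ ⟨v, hv, rfl⟩
    exact ⟨v, hv.1, rfl⟩
end
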